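/- arXiv:2508.02678 — 4 statements merged into one kernel-verified Lean document; each statement's English description precedes it below -/
import Mathlib

section
/- Let f ∈ L^p(I) for a bounded open interval I, and let Φ : J → I be a C¹ increasing bijection with Φ' > 0, with f_Φ(x) = f(Φ(x))Φ'(x) on J and 0 elsewhere. Then the p-Cramér distance satisfies C_p(f, f_Φ) ≤ ‖f‖_{L^p} · ε(Φ), where ε(Φ) = max_x |x − Φ(x)|. -/
/-!
Extend `Φ` to a monotone map `T` of `ℝ` (by `min x a` left of `J` and `max x b` right of it);
since the endpoints of `J` lie within `ε` of those of `I`, still `|x - T x| ≤ ε` everywhere.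
Change of variables turns `∫_{-∞}^x f_Φ` into `∫_{-∞}^{T x} f`, so `V(f - f_Φ)(x) = ∫_{T x}^x f`.
This is an integral operator with kernel the indicator of `{(x, t) | t between T x and x}`, whose
rows have length `|x - T x| ≤ ε` and, because `T` is monotone, whose columns have length `≤ ε` as
well; Schur's test then bounds it on `L^p` by `ε`.
-/

open MeasureTheory Real Set
open scoped ENNReal Interval

section Schur

variable {α β : Type*} [MeasurableSpace α] [MeasurableSpace β] {μ : Measure α} {ν : Measure β}

theorem lintegral_rpow_le_measure_univ_rpow_mul {g : α → ℝ≥0∞} (hg : AEMeasurable g μ) {r : ℝ}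
    (hr : 1 ≤ r) : (∫⁻ x, g x ∂μ) ^ r ≤ μ univ ^ (r - 1) * ∫⁻ x, g x ^ r ∂μ := by
  have hr0 : 0 < r := one_pos.trans_le hr
  have h := eLpNorm'_le_eLpNorm'_mul_rpow_measure_univ one_pos hr hg.aestronglyMeasurable
  simp only [eLpNorm', enorm_eq_self, ENNReal.rpow_one, div_one] at h
  calc (∫⁻ x, g x ∂μ) ^ r
      ≤ ((∫⁻ x, g x ^ r ∂μ) ^ (1 / r) * μ univ ^ (1 - 1 / r)) ^ r := by gcongr
    _ = μ univ ^ (r - 1) * ∫⁻ x, g x ^ r ∂μ := by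
      rw [ENNReal.mul_rpow_of_nonneg _ _ hr0.le, ← ENNReal.rpow_mul, ← ENNReal.rpow_mul,
        one_div_mul_cancel hr0.ne', ENNReal.rpow_one, sub_mul, one_div_mul_cancel hr0.ne',
        one_mul, mul_comm]

variable [SFinite μ] [SFinite ν]

/-- Schur's test for the kernel `𝟙_D`. -/
theorem lintegral_rpow_setLIntegral_le {D : Set (α × β)} (hD : MeasurableSet D) {C : ℝ≥0∞}
    (hrow : ∀ x, ν (Prod.mk x ⁻¹' D) ≤ C) (hcol : ∀ y, μ ((·, y) ⁻¹' D) ≤ C)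
    {g : β → ℝ≥0∞} (hg : AEMeasurable g ν) {r : ℝ} (hr : 1 ≤ r) :
    ∫⁻ x, (∫⁻ y in Prod.mk x ⁻¹' D, g y ∂ν) ^ r ∂μ ≤ C ^ r * ∫⁻ y, g y ^ r ∂ν := by
  set F := D.indicator fun z : α × β => g z.2 ^ r
  have hF : AEMeasurable F (μ.prod ν) := ((hg.pow_const r).comp_snd).indicator hD
  have hrowF : ∀ x, ∫⁻ y in Prod.mk x ⁻¹' D, g y ^ r ∂ν = ∫⁻ y, F (x, y) ∂ν := fun x => by
    rw [← lintegral_indicator (measurable_prodMk_left hD)]; rfl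
  have hcolF : ∀ y, ∫⁻ x, F (x, y) ∂μ = μ ((·, y) ⁻¹' D) * g y ^ r := fun y => by
    rw [mul_comm, ← lintegral_indicator_const (measurable_prodMk_right hD)]; rfl
  calc ∫⁻ x, (∫⁻ y in Prod.mk x ⁻¹' D, g y ∂ν) ^ r ∂μ
      ≤ ∫⁻ x, C ^ (r - 1) * ∫⁻ y, F (x, y) ∂ν ∂μ := lintegral_mono fun x => by
        rw [← hrowF]
        refine (lintegral_rpow_le_measure_univ_rpow_mul hg.restrict hr).trans ?_
        rw [Measure.restrict_apply_univ]
        gcongr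
        exact hrow x
    _ = C ^ (r - 1) * ∫⁻ y, ∫⁻ x, F (x, y) ∂μ ∂ν := by
      rw [lintegral_const_mul'' _ hF.lintegral_prod_right',
        lintegral_lintegral_swap (f := fun x y => F (x, y)) hF]
    _ ≤ C ^ (r - 1) * ∫⁻ y, C * g y ^ r ∂ν := by
      gcongr with y
      rw [hcolF]
      gcongr
      exact hcol y
    _ = C ^ r * ∫⁻ y, g y ^ r ∂ν := by
      rw [lintegral_const_mul'' _ (hg.pow_const r), ← mul_assoc]
      nth_rw 2 [← ENNReal.rpow_one C]
      rw [← ENNReal.rpow_add_of_nonneg _ _ (by linarith) zero_le_one, sub_add_cancel]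

theorem eLpNorm_le_eLpNorm_mul_of_enorm_le_setLIntegral {E F : Type*} [NormedAddCommGroup E]
    [NormedAddCommGroup F] {D : Set (α × β)} (hD : MeasurableSet D) {C : ℝ≥0∞}
    (hrow : ∀ x, ν (Prod.mk x ⁻¹' D) ≤ C) (hcol : ∀ y, μ ((·, y) ⁻¹' D) ≤ C)
    {f : α → E} {g : β → F} (hg : AEStronglyMeasurable g ν)
    (hfg : ∀ x, ‖f x‖ₑ ≤ ∫⁻ y in Prod.mk x ⁻¹' D, ‖g y‖ₑ ∂ν) {p : ℝ≥0∞} (hp : 1 ≤ p) :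
    eLpNorm f p μ ≤ eLpNorm g p ν * C := by
  rcases eq_or_ne p ∞ with rfl | hp_top
  · rw [eLpNorm_exponent_top, eLpNorm_exponent_top]
    refine eLpNormEssSup_le_of_ae_enorm_bound (ae_of_all _ fun x => (hfg x).trans ?_)
    calc ∫⁻ y in Prod.mk x ⁻¹' D, ‖g y‖ₑ ∂ν
        ≤ ∫⁻ _ in Prod.mk x ⁻¹' D, eLpNormEssSup g ν ∂ν :=
          lintegral_mono_ae (ae_restrict_of_ae (enorm_ae_le_eLpNormEssSup g ν))
      _ = eLpNormEssSup g ν * ν (Prod.mk x ⁻¹' D) := setLIntegral_const _ _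
      _ ≤ eLpNormEssSup g ν * C := by gcongr; exact hrow x
  have hp0 : p ≠ 0 := (zero_lt_one.trans_le hp).ne'
  have hr : 1 ≤ p.toReal := by simpa using ENNReal.toReal_mono hp_top hp
  have hr0 : 0 < p.toReal := one_pos.trans_le hr
  rw [eLpNorm_eq_lintegral_rpow_enorm_toReal hp0 hp_top,
    eLpNorm_eq_lintegral_rpow_enorm_toReal hp0 hp_top]
  calc (∫⁻ x, ‖f x‖ₑ ^ p.toReal ∂μ) ^ (1 / p.toReal)
      ≤ (C ^ p.toReal * ∫⁻ y, ‖g y‖ₑ ^ p.toReal ∂ν) ^ (1 / p.toReal) := by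
        gcongr
        refine (lintegral_mono fun x => ?_).trans
          (lintegral_rpow_setLIntegral_le hD hrow hcol hg.enorm hr)
        gcongr
        exact hfg x
    _ = (∫⁻ y, ‖g y‖ₑ ^ p.toReal ∂ν) ^ (1 / p.toReal) * C := by
        rw [ENNReal.mul_rpow_of_nonneg _ _ (by positivity), ← ENNReal.rpow_mul,
          mul_one_div_cancel hr0.ne', ENNReal.rpow_one, mul_comm]

end Schur

section MonotoneTransport

theorem volume_setOf_mem_uIoc_le {T : ℝ → ℝ} (hT : Monotone T) {ε : ℝ}
    (hε : ∀ x, |x - T x| ≤ ε) (t : ℝ) : volume {x | t ∈ Ι (T x) x} ≤ ENNReal.ofReal ε := by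
  rcases lt_or_ge (T t) t with ht | ht
  · calc volume {x | t ∈ Ι (T x) x} ≤ volume (Icc t (t + ε)) := measure_mono fun x hx => by
          rcases mem_uIoc.1 hx with ⟨h1, h2⟩ | ⟨h1, h2⟩
          · exact ⟨h2, by linarith [(abs_le.1 (hε x)).2]⟩
          · exact absurd ((hT h1.le).trans_lt ht) h2.not_gt
      _ = ENNReal.ofReal ε := by rw [volume_Icc, add_sub_cancel_left]
  · calc volume {x | t ∈ Ι (T x) x} ≤ volume (Icc (t - ε) t) := measure_mono fun x hx => by
          rcases mem_uIoc.1 hx with ⟨h1, h2⟩ | ⟨h1, h2⟩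
          · exact absurd (ht.trans (hT h2)) h1.not_ge
          · exact ⟨by linarith [(abs_le.1 (hε x)).1], h1.le⟩
      _ = ENNReal.ofReal ε := by rw [volume_Icc, sub_sub_cancel]

theorem eLpNorm_intervalIntegral_le {E : Type*} [NormedAddCommGroup E] [NormedSpace ℝ E]
    {T : ℝ → ℝ} (hT : Monotone T) {ε : ℝ} (hε : ∀ x, |x - T x| ≤ ε) {g : ℝ → E}
    (hg : AEStronglyMeasurable g) {p : ℝ≥0∞} (hp : 1 ≤ p) :
    eLpNorm (fun x => ∫ t in T x..x, g t) p ≤ eLpNorm g p * ENNReal.ofReal ε := by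
  have hD : MeasurableSet {z : ℝ × ℝ | z.2 ∈ Ι (T z.1) z.1} := by
    simp only [uIoc, mem_Ioc, ofPred_and]
    have hTm : Measurable fun z : ℝ × ℝ => T z.1 := hT.measurable.comp measurable_fst
    exact (measurableSet_lt (hTm.min measurable_fst) measurable_snd).inter
      (measurableSet_le measurable_snd (hTm.max measurable_fst))
  refine eLpNorm_le_eLpNorm_mul_of_enorm_le_setLIntegral hD (fun x => ?_)
    (volume_setOf_mem_uIoc_le hT hε) hg (fun x => ?_) hp
  · rw [show Prod.mk x ⁻¹' _ = Ι (T x) x from rfl, volume_uIoc]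
    exact ENNReal.ofReal_le_ofReal (hε x)
  · rw [← ofReal_norm, intervalIntegral.norm_integral_eq_norm_integral_uIoc, ofReal_norm]
    exact enorm_integral_le_lintegral_enorm _

end MonotoneTransport

theorem StrictMonoOn.image_Iic_inter {α β : Type*} [LinearOrder α] [Preorder β] {f : α → β}
    {s : Set α} (hf : StrictMonoOn f s) {x : α} (hx : x ∈ s) :
    f '' (Iic x ∩ s) = Iic (f x) ∩ f '' s := by
  ext y
  constructor
  · rintro ⟨t, ⟨htx, ht⟩, rfl⟩
    exact ⟨hf.monotoneOn ht hx htx, mem_image_of_mem f ht⟩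
  · rintro ⟨hy, t, ht, rfl⟩
    exact ⟨t, ⟨(hf.le_iff_le ht hx).1 hy, ht⟩, rfl⟩

theorem strictMonoOn_of_hasDerivAt_pos {D : Set ℝ} (hD : Convex ℝ D) {f f' : ℝ → ℝ}
    (hf : ∀ x ∈ D, HasDerivAt f (f' x) x) (hf' : ∀ x ∈ D, 0 < f' x) : StrictMonoOn f D :=
  strictMonoOn_of_hasDerivWithinAt_pos hD (fun x hx => (hf x hx).continuousAt.continuousWithinAt)
    (fun x hx => (hf x (interior_subset hx)).hasDerivWithinAt)
    fun x hx => hf' x (interior_subset hx)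

noncomputable def extendIoo (a b c e : ℝ) (Φ : ℝ → ℝ) (x : ℝ) : ℝ :=
  if x ≤ c then min x a else if x < e then Φ x else max x b

section ExtendIoo

variable {a b c e : ℝ} {Φ Φ' f : ℝ → ℝ}

theorem extendIoo_of_le {x : ℝ} (hx : x ≤ c) : extendIoo a b c e Φ x = min x a := if_pos hx

theorem extendIoo_of_mem {x : ℝ} (hx : x ∈ Ioo c e) : extendIoo a b c e Φ x = Φ x := by
  simp [extendIoo, hx.1.not_ge, hx.2]

theorem extendIoo_of_ge {x : ℝ} (hce : c < e) (hx : e ≤ x) :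
    extendIoo a b c e Φ x = max x b := by
  simp [extendIoo, (hce.trans_le hx).not_ge, hx.not_gt]

theorem monotone_extendIoo (hab : a ≤ b) (hmono : MonotoneOn Φ (Ioo c e))
    (hmaps : MapsTo Φ (Ioo c e) (Ioo a b)) : Monotone (extendIoo a b c e Φ) := by
  intro x y hxy
  simp only [extendIoo]
  split_ifs with hx hy hy' hx' hy hy' hy hy'
  · exact min_le_min_right a hxy
  · exact (min_le_right x a).trans (hmaps ⟨not_le.1 hy, hy'⟩).1.le
  · exact (min_le_right x a).trans (hab.trans (le_max_right y b))
  · exact absurd (hxy.trans hy) hx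
  · exact hmono ⟨not_le.1 hx, hx'⟩ ⟨not_le.1 hy, hy'⟩ hxy
  · exact (hmaps ⟨not_le.1 hx, hx'⟩).2.le.trans (le_max_right y b)
  · exact absurd (hxy.trans hy) hx
  · exact absurd (hxy.trans_lt hy') hx'
  · exact max_le_max_right b hxy

theorem abs_sub_extendIoo_le (hab : a < b) (hce : c < e) (hbij : BijOn Φ (Ioo c e) (Ioo a b))
    {ε : ℝ} (hε : ∀ x ∈ Ioo c e, |x - Φ x| ≤ ε) (x : ℝ) : |x - extendIoo a b c e Φ x| ≤ ε := by
  have hε0 : 0 ≤ ε := (abs_nonneg _).trans (hε ((c + e) / 2) ⟨by linarith, by linarith⟩)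
  have hclose : ∀ y ∈ Ioo a b, c - ε ≤ y ∧ y ≤ e + ε := by
    intro y hy
    obtain ⟨s, hs, rfl⟩ := hbij.surjOn hy
    have := abs_le.1 (hε s hs)
    constructor <;> linarith [hs.1, hs.2]
  have hIcc : Icc a b ⊆ Icc (c - ε) (e + ε) := by
    rw [← closure_Ioo hab.ne]
    exact isClosed_Icc.closure_subset_iff.2 hclose
  have hca : c - ε ≤ a := (hIcc (left_mem_Icc.2 hab.le)).1
  have hbe : b ≤ e + ε := (hIcc (right_mem_Icc.2 hab.le)).2
  rcases le_or_gt x c with hxc | hcx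
  · rw [extendIoo_of_le hxc, abs_le]
    rcases min_cases x a with ⟨h, _⟩ | ⟨h, _⟩ <;> rw [h] <;> constructor <;> linarith
  rcases lt_or_ge x e with hxe | hex
  · rw [extendIoo_of_mem ⟨hcx, hxe⟩]
    exact hε x ⟨hcx, hxe⟩
  · rw [extendIoo_of_ge hce hex, abs_le]
    rcases max_cases x b with ⟨h, _⟩ | ⟨h, _⟩ <;> rw [h] <;> constructor <;> linarith

theorem image_Iic_inter_Ioo_eq_Iic_extendIoo_inter (hce : c < e)
    (hbij : BijOn Φ (Ioo c e) (Ioo a b)) (hmono : StrictMonoOn Φ (Ioo c e)) (x : ℝ) :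
    Φ '' (Iic x ∩ Ioo c e) = Iic (extendIoo a b c e Φ x) ∩ Ioo a b := by
  rcases le_or_gt x c with hxc | hcx
  · rw [extendIoo_of_le hxc]
    have hl : Iic x ∩ Ioo c e = ∅ := eq_empty_of_forall_notMem fun t ht => by
      linarith [mem_Iic.1 ht.1, ht.2.1]
    have hr : Iic (min x a) ∩ Ioo a b = ∅ := eq_empty_of_forall_notMem fun t ht => by
      linarith [mem_Iic.1 ht.1, min_le_right x a, ht.2.1]
    rw [hl, hr, image_empty]
  rcases lt_or_ge x e with hxe | hex
  · rw [extendIoo_of_mem ⟨hcx, hxe⟩, hmono.image_Iic_inter ⟨hcx, hxe⟩, hbij.image_eq]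
  · rw [extendIoo_of_ge hce hex, inter_eq_right.2 fun t ht => mem_Iic.2 (ht.2.le.trans hex),
      inter_eq_right.2 fun t ht => mem_Iic.2 (ht.2.le.trans (le_max_right x b)), hbij.image_eq]

theorem integrable_indicator_comp_mul_deriv (hf : IntegrableOn f (Ioo a b))
    (hbij : BijOn Φ (Ioo c e) (Ioo a b)) (hderiv : ∀ x ∈ Ioo c e, HasDerivAt Φ (Φ' x) x)
    (hpos : ∀ x ∈ Ioo c e, 0 < Φ' x) :
    Integrable ((Ioo c e).indicator fun t => f (Φ t) * Φ' t) := by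
  rw [integrable_indicator_iff measurableSet_Ioo]
  rw [← hbij.image_eq, integrableOn_image_iff_integrableOn_abs_deriv_smul measurableSet_Ioo
    (fun x hx => (hderiv x hx).hasDerivWithinAt) hbij.injOn] at hf
  refine hf.congr_fun (fun t ht => ?_) measurableSet_Ioo
  dsimp only
  rw [abs_of_pos (hpos t ht), smul_eq_mul, mul_comm]

theorem integral_Iic_indicator_comp_mul_deriv (hce : c < e) (hf : Function.support f ⊆ Ioo a b)
    (hbij : BijOn Φ (Ioo c e) (Ioo a b)) (hderiv : ∀ x ∈ Ioo c e, HasDerivAt Φ (Φ' x) x)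
    (hpos : ∀ x ∈ Ioo c e, 0 < Φ' x) (x : ℝ) :
    ∫ t in Iic x, (Ioo c e).indicator (fun t => f (Φ t) * Φ' t) t =
      ∫ t in Iic (extendIoo a b c e Φ x), f t := by
  have hs : MeasurableSet (Iic x ∩ Ioo c e) := measurableSet_Iic.inter measurableSet_Ioo
  rw [setIntegral_indicator measurableSet_Ioo]
  calc ∫ t in Iic x ∩ Ioo c e, f (Φ t) * Φ' t
      = ∫ t in Iic x ∩ Ioo c e, |Φ' t| • f (Φ t) := setIntegral_congr_fun hs fun t ht => by
        rw [abs_of_pos (hpos t ht.2), smul_eq_mul, mul_comm]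
    _ = ∫ t in Φ '' (Iic x ∩ Ioo c e), f t :=
        (integral_image_eq_integral_abs_deriv_smul hs (fun t ht => (hderiv t ht.2).hasDerivWithinAt)
          (hbij.injOn.mono inter_subset_right) f).symm
    _ = ∫ t in Iic (extendIoo a b c e Φ x) ∩ Ioo a b, f t := by
        rw [image_Iic_inter_Ioo_eq_Iic_extendIoo_inter hce hbij
          (strictMonoOn_of_hasDerivAt_pos (convex_Ioo c e) hderiv hpos)]
    _ = ∫ t in Iic (extendIoo a b c e Φ x), f t := by
        rw [← setIntegral_indicator measurableSet_Ioo, indicator_eq_self.2 hf]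

end ExtendIoo

theorem cramer_monotone_deformation_general (p : ℝ≥0∞) (hp : 1 ≤ p)
    (a b c e : ℝ) (hab : a < b) (hce : c < e)
    (f : ℝ → ℝ) (hf : MemLp f p) (hf0 : ∀ x, x ∉ Ioo a b → f x = 0)
    (Φ Φ' : ℝ → ℝ)
    (hbij : BijOn Φ (Ioo c e) (Ioo a b))
    (hderiv : ∀ x ∈ Ioo c e, HasDerivAt Φ (Φ' x) x)
    (hpos : ∀ x ∈ Ioo c e, 0 < Φ' x)
    (fΦ : ℝ → ℝ)
    (hfΦ : ∀ x, fΦ x = if x ∈ Ioo c e then f (Φ x) * Φ' x else 0) :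
    eLpNorm (fun x => ∫ t in Iic x, (f t - fΦ t)) p volume ≤
      eLpNorm f p volume *
        ENNReal.ofReal (sSup ((fun x => |x - Φ x|) '' Ioo c e)) := by
  have hbdd : BddAbove ((fun x => |x - Φ x|) '' Ioo c e) := by
    refine ⟨max (e - a) (b - c), ?_⟩
    rintro _ ⟨x, hx, rfl⟩
    have hΦx := hbij.mapsTo hx
    exact abs_sub_le_iff.2 ⟨by linarith [le_max_left (e - a) (b - c), hx.2, hΦx.1],
      by linarith [le_max_right (e - a) (b - c), hx.1, hΦx.2]⟩
  have hsupp : Function.support f ⊆ Ioo a b := Function.support_subset_iff'.2 hf0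
  have hfi : Integrable f :=
    (integrableOn_iff_integrable_of_support_subset hsupp).1 ((hf.restrict _).integrable hp)
  have hfΦ_eq : fΦ = (Ioo c e).indicator fun t => f (Φ t) * Φ' t :=
    funext fun x => by simp only [hfΦ x, indicator_apply]
  have hfΦi : Integrable fΦ :=
    hfΦ_eq ▸ integrable_indicator_comp_mul_deriv hfi.integrableOn hbij hderiv hpos
  have hV : ∀ x, ∫ t in Iic x, (f t - fΦ t) = ∫ t in extendIoo a b c e Φ x..x, f t := fun x => by
    rw [integral_sub hfi.integrableOn hfΦi.integrableOn, hfΦ_eq,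
      integral_Iic_indicator_comp_mul_deriv hce hsupp hbij hderiv hpos,
      intervalIntegral.integral_Iic_sub_Iic hfi.integrableOn hfi.integrableOn]
  simp only [hV]
  exact eLpNorm_intervalIntegral_le
    (monotone_extendIoo hab.le
      (strictMonoOn_of_hasDerivAt_pos (convex_Ioo c e) hderiv hpos).monotoneOn hbij.mapsTo)
    (abs_sub_extendIoo_le hab hce hbij fun x hx => le_csSup hbdd ⟨x, hx, rfl⟩) hf.1 hp

/-- Sharper 1D deformation bound for monotonically increasing deformations:
if `Φ : J → I` is a `C¹` increasing bijection between bounded open intervals,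
`f ∈ L^p(I)` (extended by zero), and `f_Φ(x) = f(Φ(x)) Φ'(x)` on `J` and `0` elsewhere,
then `C_p(f, f_Φ) ≤ ‖f‖_{L^p} · ε(Φ)`, where `ε(Φ) = sup_{x ∈ J} |x − Φ(x)|`. -/
theorem cramer_monotone_deformation (p : ℝ≥0∞) (hp : 1 ≤ p)
    (a b c e : ℝ) (hab : a < b) (hce : c < e)
    (f : ℝ → ℝ) (hf : MemLp f p) (hf0 : ∀ x, x ∉ Ioo a b → f x = 0)
    (Φ Φ' : ℝ → ℝ)
    (hbij : BijOn Φ (Ioo c e) (Ioo a b))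
    (hderiv : ∀ x ∈ Ioo c e, HasDerivAt Φ (Φ' x) x)
    (hpos : ∀ x ∈ Ioo c e, 0 < Φ' x)
    (hcont : ContinuousOn Φ' (Ioo c e))
    (fΦ : ℝ → ℝ)
    (hfΦ : ∀ x, fΦ x = if x ∈ Ioo c e then f (Φ x) * Φ' x else 0) :
    eLpNorm (fun x => ∫ t in Iic x, (f t - fΦ t)) p volume ≤
      eLpNorm f p volume *
        ENNReal.ofReal (sSup ((fun x => |x - Φ x|) '' Ioo c e)) :=
  cramer_monotone_deformation_general p hp a b c e hab hce f hf hf0 Φ Φ' hbij hderiv hpos fΦ hfΦ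
end

section
/- (2D rotation overlap bound) Let 0 ≤ θ < π/2, c = cos θ, s = sin θ, and for 0 ≤ t ≤ 1 let S_t be the set of x ∈ [−1,1] for which there exists y with x² + y² < 1 such that t lies between x and cx − sy. Then the Lebesgue measure of S_t is at most 2s√(1−t²) if 0 ≤ t < c, and at most 1 − ct + s√(1−t²) if c ≤ t ≤ 1; in particular |S_t| ≤ 2 sin θ. -/
open MeasureTheory Real Set
open scoped ENNReal

private lemma rot_sq_le (a b : ℝ) (hb : 0 ≤ b) (h : a ^ 2 ≤ b ^ 2) : a ≤ b := by
  nlinarith [sq_nonneg (a - b), sq_nonneg (a + b)]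

private lemma rot_mono (c s A t u r : ℝ) (hc0 : 0 < c) (hs0 : 0 ≤ s)
    (hu0 : 0 ≤ u) (hr0 : 0 ≤ r) (hAt : A ≤ t)
    (hur : u ^ 2 - r ^ 2 = t ^ 2 - A ^ 2)
    (hcu : s * A ≤ c * u) (hcr : s * t ≤ c * r) :
    c * A + s * u ≤ c * t + s * r := by
  rcases eq_or_lt_of_le (add_nonneg hu0 hr0) with heq | hlt
  · have hu' : u = 0 := by linarith
    have hr' : r = 0 := by linarith
    rw [hu', hr']
    nlinarith [mul_le_mul_of_nonneg_left hAt hc0.le]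
  · have h2 : 0 ≤ (t - A) * (c * (u + r) - s * (A + t)) :=
      mul_nonneg (by linarith) (by linarith)
    have h3 : (u + r) * (c * (t - A) - s * (u - r))
        = (t - A) * (c * (u + r) - s * (A + t)) := by linear_combination -s * hur
    nlinarith [h2, h3, hlt]

private lemma rot_aux_low (c s t x y r : ℝ) (hsc : s ^ 2 + c ^ 2 = 1)
    (hc0 : 0 < c) (hs0 : 0 ≤ s) (ht0 : 0 ≤ t)
    (hr0 : 0 ≤ r) (hr2 : r ^ 2 = 1 - t ^ 2) (hxy : x ^ 2 + y ^ 2 < 1)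
    (h : (x ≤ t ∧ t ≤ c * x - s * y) ∨ (c * x - s * y ≤ t ∧ t ≤ x)) :
    c * t - s * r ≤ x := by
  rcases h with ⟨hxt, hts⟩ | ⟨hts, htx⟩
  · have hAB : (c * x - s * y) ^ 2 + (s * x + c * y) ^ 2 = x ^ 2 + y ^ 2 := by
      linear_combination (x ^ 2 + y ^ 2) * hsc
    have hxeq : x = c * (c * x - s * y) + s * (s * x + c * y) := by
      linear_combination -x * hsc
    have hB2 : (s * x + c * y) ^ 2 ≤ 1 - t ^ 2 := by nlinarith
    have hBlow : -r ≤ s * x + c * y := by nlinarith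
    have h1 := mul_le_mul_of_nonneg_left hts hc0.le
    have h2 := mul_le_mul_of_nonneg_left hBlow hs0
    nlinarith
  · nlinarith [mul_nonneg hs0 hr0]

private lemma rot_aux_up (c s t x y r : ℝ) (hsc : s ^ 2 + c ^ 2 = 1)
    (hc0 : 0 < c) (hs0 : 0 ≤ s) (ht0 : 0 ≤ t) (htc : t ≤ c)
    (hr0 : 0 ≤ r) (hr2 : r ^ 2 = 1 - t ^ 2) (hxy : x ^ 2 + y ^ 2 < 1)
    (h : (x ≤ t ∧ t ≤ c * x - s * y) ∨ (c * x - s * y ≤ t ∧ t ≤ x)) :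
    x ≤ c * t + s * r := by
  have hc1 : c ≤ 1 := by nlinarith
  have hrs : s ≤ r := by nlinarith
  rcases h with ⟨hxt, hts⟩ | ⟨hts, htx⟩
  · -- x ≤ t ≤ c*t + s*r since t*(1-c) ≤ 1 - c^2 = s^2 ≤ s*r
    nlinarith [mul_le_mul_of_nonneg_right htc (by linarith : (0:ℝ) ≤ 1 - c),
      mul_le_mul_of_nonneg_left hrs hs0]
  · set A := c * x - s * y with hA
    set B := s * x + c * y with hB
    have hAB : A ^ 2 + B ^ 2 = x ^ 2 + y ^ 2 := by
      rw [hA, hB]; linear_combination (x ^ 2 + y ^ 2) * hsc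
    have hxeq : x = c * A + s * B := by
      rw [hA, hB]; linear_combination -x * hsc
    clear_value A B
    clear hA hB
    have h1A : (0 : ℝ) ≤ 1 - A ^ 2 := by nlinarith
    set u := Real.sqrt (1 - A ^ 2) with hudef
    have hu0 : 0 ≤ u := Real.sqrt_nonneg _
    have hu2 : u ^ 2 = 1 - A ^ 2 := Real.sq_sqrt h1A
    clear_value u
    clear hudef
    have hBu : B ≤ u := by nlinarith
    have hAc : A ≤ c := le_trans hts htc
    have hcu : s * A ≤ c * u := by
      rcases le_or_gt A 0 with hA0 | hA0
      · have : s * A ≤ 0 := mul_nonpos_of_nonneg_of_nonpos hs0 hA0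
        have : 0 ≤ c * u := mul_nonneg hc0.le hu0
        linarith
      · apply rot_sq_le _ _ (mul_nonneg hc0.le hu0)
        have hA2 : A ^ 2 ≤ c ^ 2 := by nlinarith
        have hdiff : (c * u) ^ 2 - (s * A) ^ 2 = c ^ 2 - A ^ 2 := by
          linear_combination c ^ 2 * hu2 - A ^ 2 * hsc
        linarith
    have hcr : s * t ≤ c * r := by
      apply rot_sq_le _ _ (mul_nonneg hc0.le hr0)
      have ht2 : t ^ 2 ≤ c ^ 2 := by nlinarith
      have hdiff : (c * r) ^ 2 - (s * t) ^ 2 = c ^ 2 - t ^ 2 := by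
        linear_combination c ^ 2 * hr2 - t ^ 2 * hsc
      linarith
    have hkey : c * A + s * u ≤ c * t + s * r :=
      rot_mono c s A t u r hc0 hs0 hu0 hr0 hts (by linarith) hcu hcr
    nlinarith [mul_le_mul_of_nonneg_left hBu hs0]

/-- 2D rotation overlap bound: for `0 ≤ θ < π/2`, `c = cos θ`, `s = sin θ`, and
`0 ≤ t ≤ 1`, the set `S_t` of `x ∈ [−1,1]` admitting some `y` with `x² + y² < 1` such
that `t` lies between `x` and `cx − sy` has Lebesgue measure at most `2s√(1−t²)` when
`t < c`, at most `1 − ct + s√(1−t²)` when `c ≤ t`; in particular `|S_t| ≤ 2 sin θ`. -/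
theorem rotation_overlap_bound (θ : ℝ) (hθ0 : 0 ≤ θ) (hθ : θ < π / 2)
    (t : ℝ) (ht0 : 0 ≤ t) (ht1 : t ≤ 1) :
    let c := Real.cos θ
    let s := Real.sin θ
    let St : Set ℝ := {x | x ∈ Icc (-1 : ℝ) 1 ∧ ∃ y : ℝ, x ^ 2 + y ^ 2 < 1 ∧
      ((x ≤ t ∧ t ≤ c * x - s * y) ∨ (c * x - s * y ≤ t ∧ t ≤ x))}
    (t < c → volume St ≤ ENNReal.ofReal (2 * s * Real.sqrt (1 - t ^ 2))) ∧
    (c ≤ t → volume St ≤ ENNReal.ofReal (1 - c * t + s * Real.sqrt (1 - t ^ 2))) ∧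
    volume St ≤ ENNReal.ofReal (2 * Real.sin θ) := by
  intro c s St
  have hpi : (0:ℝ) < π := Real.pi_pos
  have hs0 : 0 ≤ s := Real.sin_nonneg_of_nonneg_of_le_pi hθ0 (by linarith)
  have hc0 : 0 < c := Real.cos_pos_of_mem_Ioo ⟨by linarith, hθ⟩
  have hc1 : c ≤ 1 := Real.cos_le_one θ
  have hs1 : s ≤ 1 := Real.sin_le_one θ
  have hsc : s ^ 2 + c ^ 2 = 1 := Real.sin_sq_add_cos_sq θ
  have h1t : (0:ℝ) ≤ 1 - t ^ 2 := by nlinarith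
  set r := Real.sqrt (1 - t ^ 2) with hrdef
  have hr0 : 0 ≤ r := Real.sqrt_nonneg _
  have hr2 : r ^ 2 = 1 - t ^ 2 := Real.sq_sqrt h1t
  have hr1 : r ≤ 1 := by nlinarith
  have hlow : ∀ x ∈ St, c * t - s * r ≤ x := by
    rintro x ⟨hx, y, hxy, hcase⟩
    exact rot_aux_low c s t x y r hsc hc0 hs0 ht0 hr0 hr2 hxy hcase
  have hup : t ≤ c → ∀ x ∈ St, x ≤ c * t + s * r := by
    rintro htc x ⟨hx, y, hxy, hcase⟩
    exact rot_aux_up c s t x y r hsc hc0 hs0 ht0 htc hr0 hr2 hxy hcase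
  have hx1 : ∀ x ∈ St, x ≤ 1 := by rintro x ⟨hx, -⟩; exact hx.2
  have hb1 : t < c → volume St ≤ ENNReal.ofReal (2 * s * r) := by
    intro htc
    have hsub : St ⊆ Icc (c * t - s * r) (c * t + s * r) := fun x hx =>
      ⟨hlow x hx, hup htc.le x hx⟩
    calc volume St ≤ volume (Icc (c * t - s * r) (c * t + s * r)) := measure_mono hsub
      _ = ENNReal.ofReal ((c * t + s * r) - (c * t - s * r)) := Real.volume_Icc
      _ ≤ ENNReal.ofReal (2 * s * r) := ENNReal.ofReal_le_ofReal (by linarith)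
  have hb2 : c ≤ t → volume St ≤ ENNReal.ofReal (1 - c * t + s * r) := by
    intro hct
    have hsub : St ⊆ Icc (c * t - s * r) 1 := fun x hx => ⟨hlow x hx, hx1 x hx⟩
    calc volume St ≤ volume (Icc (c * t - s * r) 1) := measure_mono hsub
      _ = ENNReal.ofReal (1 - (c * t - s * r)) := Real.volume_Icc
      _ ≤ ENNReal.ofReal (1 - c * t + s * r) := ENNReal.ofReal_le_ofReal (by linarith)
  refine ⟨hb1, hb2, ?_⟩
  rcases lt_or_ge t c with h | h
  · refine (hb1 h).trans (ENNReal.ofReal_le_ofReal ?_)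
    nlinarith [mul_le_mul_of_nonneg_left hr1 hs0]
  · have hrs : r ≤ s := by nlinarith
    refine (hb2 h).trans (ENNReal.ofReal_le_ofReal ?_)
    nlinarith [mul_le_mul_of_nonneg_left hrs hs0]
end

section
/- Fix 0 ≤ t ≤ 1, c = cos θ, s = sin θ with 0 ≤ θ < π/2. If x ∈ [−1,1] admits some y with x² + y² ≤ 1 and such that t lies between x and cx − sy, then x ≥ ct − s√(1 − t²). -/
open Real Set

/-- Left endpoint bound for the 2D rotation overlap set: if `0 ≤ t ≤ 1`, `c = cos θ`,
`s = sin θ` with `0 ≤ θ < π/2`, and `x ∈ [−1,1]` admits some `y` with `x² + y² ≤ 1`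
such that `t` lies between `x` and `cx − sy`, then `x ≥ ct − s√(1 − t²)`. -/
theorem rotation_overlap_left_endpoint (θ : ℝ) (hθ0 : 0 ≤ θ) (hθ : θ < π / 2)
    (t : ℝ) (ht0 : 0 ≤ t) (ht1 : t ≤ 1)
    (x : ℝ) (hx : x ∈ Icc (-1 : ℝ) 1) (y : ℝ) (hxy : x ^ 2 + y ^ 2 ≤ 1)
    (hbetween : (x ≤ t ∧ t ≤ Real.cos θ * x - Real.sin θ * y) ∨
      (Real.cos θ * x - Real.sin θ * y ≤ t ∧ t ≤ x)) :
    x ≥ Real.cos θ * t - Real.sin θ * Real.sqrt (1 - t ^ 2) := by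
  have hc : 0 < Real.cos θ := Real.cos_pos_of_mem_Ioo ⟨by linarith [Real.pi_pos], hθ⟩
  have hc1 : Real.cos θ ≤ 1 := Real.cos_le_one θ
  have hs : 0 ≤ Real.sin θ := Real.sin_nonneg_of_nonneg_of_le_pi hθ0
    (by linarith [Real.pi_pos])
  have hcs : Real.sin θ ^ 2 + Real.cos θ ^ 2 = 1 := Real.sin_sq_add_cos_sq θ
  have hsq : 0 ≤ Real.sqrt (1 - t ^ 2) := Real.sqrt_nonneg _
  have hsqsq : Real.sqrt (1 - t ^ 2) ^ 2 = 1 - t ^ 2 :=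
    Real.sq_sqrt (by nlinarith)
  rcases hbetween with ⟨hxt, htu⟩ | ⟨_, htx⟩
  · set u := Real.cos θ * x - Real.sin θ * y with hu
    set v := Real.sin θ * x + Real.cos θ * y with hv
    have huv : u ^ 2 + v ^ 2 ≤ 1 := by simp only [hu, hv]; nlinarith
    have hxcu : x = Real.cos θ * u + Real.sin θ * v := by
      simp only [hu, hv]; nlinarith
    have hv2 : v ^ 2 ≤ 1 - t ^ 2 := by nlinarith [sq_nonneg u, sq_nonneg v]
    have hvge : -Real.sqrt (1 - t ^ 2) ≤ v := by nlinarith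
    rw [hxcu]; nlinarith
  · nlinarith
end

section
/- (Riemann-sum p-norm error) Suppose G : [a,b] → ℝ is Lipschitz with constant at most A, L = b − a, and t_k = a + kL/n for 0 ≤ k ≤ n. Then for 1 ≤ p < ∞, |((L/n)∑_{k=0}^{n−1} |G(t_k)|^p)^{1/p} − ‖G‖_{L^p([a,b])}| ≤ A L^{1+1/p}/n, and for p = ∞, |max_{0≤k≤n} |G(t_k)| − ‖G‖_{L^∞}| ≤ AL/n. -/
/-! The Riemann sum `(L/n) ∑ |G(t_k)|^p` is `∫ |S|^p` for the step function `S = G(t_k)` on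
`[t_k, t_{k+1})`, and the Lipschitz bound gives `|S - G| ≤ A L/n` on `[a,b]`. Minkowski's
inequality in `L^p([a,b])` turns this uniform bound into
`|‖S‖_p - ‖G‖_p| ≤ (A L/n) L^{1/p}`. For `p = ∞`, every point of `[a,b]` lies within `L/n`
of a grid point, so the maximum over the grid and the supremum over `[a,b]` differ by at
most `A L/n`. -/

open MeasureTheory Real Set Finset
open scoped NNReal

section LpPerturbation

variable {α E : Type*} [MeasurableSpace α] [NormedAddCommGroup E] {μ : Measure α}

theorem MeasureTheory.MemLp.norm_toLp_eq_integral_rpow {p : ℝ} (hp : 0 < p) {f : α → E}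
    (hf : MemLp f (ENNReal.ofReal p) μ) :
    ‖hf.toLp f‖ = (∫ x, ‖f x‖ ^ p ∂μ) ^ (1 / p) := by
  rw [Lp.norm_toLp, hf.eLpNorm_eq_integral_rpow_norm (by simpa using hp) ENNReal.ofReal_ne_top,
    ENNReal.toReal_ofReal (by positivity), ENNReal.toReal_ofReal hp.le, one_div]

theorem abs_integral_norm_rpow_rpow_sub_le [IsFiniteMeasure μ] {p c : ℝ} (hp : 1 ≤ p)
    {f g : α → E} (hf : AEStronglyMeasurable f μ) (hg : MemLp g (ENNReal.ofReal p) μ)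
    (hc : 0 ≤ c) (hfg : ∀ᵐ x ∂μ, ‖f x - g x‖ ≤ c) :
    |(∫ x, ‖f x‖ ^ p ∂μ) ^ (1 / p) - (∫ x, ‖g x‖ ^ p ∂μ) ^ (1 / p)| ≤
      μ.real univ ^ (1 / p) * c := by
  have : Fact (1 ≤ ENNReal.ofReal p) := ⟨by simpa using hp⟩
  have hp0 : 0 < p := by linarith
  have hfg' : MemLp (f - g) (ENNReal.ofReal p) μ := .of_bound (hf.sub hg.1) c hfg
  have hf' : MemLp f (ENNReal.ofReal p) μ := by simpa using hfg'.add hg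
  calc _ = |‖hf'.toLp f‖ - ‖hg.toLp g‖| := by
        rw [hf'.norm_toLp_eq_integral_rpow hp0, hg.norm_toLp_eq_integral_rpow hp0]
    _ ≤ ‖hfg'.toLp (f - g)‖ := by
        rw [MemLp.toLp_sub hf' hg]
        exact abs_norm_sub_norm_le _ _
    _ ≤ measureUnivNNReal μ ^ (ENNReal.ofReal p).toReal⁻¹ * c := by
        refine Lp.norm_le_of_ae_bound hc ?_
        filter_upwards [hfg'.coeFn_toLp, hfg] with x hx hxc
        rwa [hx]
    _ = μ.real univ ^ (1 / p) * c := by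
        rw [ENNReal.toReal_ofReal hp0.le, one_div]
        rfl

end LpPerturbation

noncomputable def gridIndex (a h x : ℝ) : ℕ := ⌊(x - a) / h⌋₊

section gridIndex

variable {a h x : ℝ}

theorem measurable_gridIndex (a h : ℝ) : Measurable (gridIndex a h) :=
  ((measurable_id.sub_const a).div_const h).nat_floor

theorem gridIndex_eq_of_mem_Ico (hh : 0 < h) {k : ℕ}
    (hx : x ∈ Ico (a + k * h) (a + (k + 1) * h)) :
    gridIndex a h x = k := by
  have hk : (k : ℝ) ≤ (x - a) / h := by rw [le_div_iff₀ hh]; linarith [hx.1]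
  rw [gridIndex, Nat.floor_eq_iff ((Nat.cast_nonneg k).trans hk)]
  exact ⟨hk, by rw [div_lt_iff₀ hh]; linarith [hx.2]⟩

theorem gridIndex_mul_le (hh : 0 < h) (hx : a ≤ x) : a + gridIndex a h x * h ≤ x := by
  rw [← le_sub_iff_add_le', ← le_div_iff₀ hh]
  exact Nat.floor_le (div_nonneg (sub_nonneg.2 hx) hh.le)

theorem lt_gridIndex_mul_add (hh : 0 < h) : x < a + gridIndex a h x * h + h := by
  have := Nat.lt_floor_add_one ((x - a) / h)
  rw [div_lt_iff₀ hh] at this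
  rw [gridIndex]
  linarith

theorem gridIndex_le (hh : 0 < h) {n : ℕ} (hx : x ≤ a + n * h) : gridIndex a h x ≤ n :=
  Nat.floor_le_of_le (by rw [div_le_iff₀ hh]; linarith)

theorem integral_comp_gridIndex {E : Type*} [NormedAddCommGroup E] [NormedSpace ℝ E]
    [CompleteSpace E] (v : ℕ → E) (hh : 0 < h) (n : ℕ) :
    ∫ x in a..a + n * h, v (gridIndex a h x) = ∑ k ∈ range n, h • v k := by
  have hcell : ∀ k : ℕ, EqOn (fun x => v (gridIndex a h x)) (fun _ => v k)
      (Ioo (a + k * h) (a + (k + 1 : ℕ) * h)) := fun k x hx => by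
    dsimp only
    rw [gridIndex_eq_of_mem_Ico hh (by push_cast at hx; exact Ioo_subset_Ico_self hx)]
  have hle : ∀ k : ℕ, a + k * h ≤ a + (k + 1 : ℕ) * h := fun k => by push_cast; nlinarith
  have hint : ∀ k < n, IntervalIntegrable (fun x => v (gridIndex a h x)) volume
      (a + k * h) (a + (k + 1 : ℕ) * h) := fun k _ =>
    intervalIntegrable_const.congr_uIoo (uIoo_of_le (hle k) ▸ (hcell k).symm)
  calc ∫ x in a..a + n * h, v (gridIndex a h x)
      = ∑ k ∈ range n, ∫ x in a + k * h..a + (k + 1 : ℕ) * h, v (gridIndex a h x) := by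
        simpa using (intervalIntegral.sum_integral_adjacent_intervals hint).symm
    _ = ∑ k ∈ range n, h • v k := by
        refine Finset.sum_congr rfl fun k _ => ?_
        rw [intervalIntegral.integral_congr_Ioo_of_le (hle k) (hcell k),
          intervalIntegral.integral_const]
        push_cast
        ring_nf

theorem dist_gridIndex_mul_le (hh : 0 < h) (hx : a ≤ x) :
    dist x (a + gridIndex a h x * h) ≤ h := by
  rw [Real.dist_eq, abs_of_nonneg (sub_nonneg.2 (gridIndex_mul_le hh hx))]
  linarith [lt_gridIndex_mul_add (a := a) (x := x) hh]

theorem add_mul_mem_Icc (hh : 0 ≤ h) {k n : ℕ} (hk : k ≤ n) : a + k * h ∈ Icc a (a + n * h) :=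
  ⟨by simp only [le_add_iff_nonneg_right]; positivity, by gcongr⟩

theorem gridIndex_mul_mem_Icc (hh : 0 < h) {n : ℕ} (hx : x ∈ Icc a (a + n * h)) :
    a + gridIndex a h x * h ∈ Icc a (a + n * h) :=
  add_mul_mem_Icc hh.le (gridIndex_le hh hx.2)

end gridIndex

theorem abs_sup'_sub_sSup_image_le_of_dist_le {X ι : Type*} [PseudoMetricSpace X] {s : Set X}
    {f : X → ℝ} {K : ℝ≥0} (hf : LipschitzOnWith K f s) (hbdd : BddAbove (f '' s))
    {T : Finset ι} (hT : T.Nonempty) {y : ι → X} (hys : ∀ i ∈ T, y i ∈ s) {δ : ℝ}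
    (hδ : ∀ x ∈ s, ∃ i ∈ T, dist x (y i) ≤ δ) :
    |T.sup' hT (fun i => f (y i)) - sSup (f '' s)| ≤ K * δ := by
  obtain ⟨i₀, hi₀⟩ := hT
  have hδ0 : 0 ≤ δ := by
    obtain ⟨i, -, hi⟩ := hδ _ (hys i₀ hi₀)
    exact dist_nonneg.trans hi
  have hsup_le : T.sup' ⟨i₀, hi₀⟩ (fun i => f (y i)) ≤ sSup (f '' s) :=
    Finset.sup'_le _ _ fun i hi => le_csSup hbdd (mem_image_of_mem f (hys i hi))
  have hle_sup : sSup (f '' s) ≤ T.sup' ⟨i₀, hi₀⟩ (fun i => f (y i)) + K * δ := by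
    refine csSup_le (Set.Nonempty.image f ⟨y i₀, hys i₀ hi₀⟩) ?_
    rintro _ ⟨x, hx, rfl⟩
    obtain ⟨i, hi, hxi⟩ := hδ x hx
    have hfx : f x ≤ f (y i) + K * δ := by
      have := (hf.dist_le_mul x hx (y i) (hys i hi)).trans
        (mul_le_mul_of_nonneg_left hxi K.coe_nonneg)
      rw [Real.dist_eq] at this
      linarith [le_abs_self (f x - f (y i))]
    linarith [Finset.le_sup' (fun i => f (y i)) hi]
  have hKδ : 0 ≤ K * δ := mul_nonneg K.coe_nonneg hδ0
  rw [abs_sub_le_iff]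
  exact ⟨by linarith, by linarith⟩

section RiemannSum

variable {G : ℝ → ℝ} {K : ℝ≥0} {a h : ℝ} {n : ℕ}

theorem abs_riemannSum_rpow_sub_integral_rpow_le (hh : 0 < h)
    (hG : LipschitzOnWith K G (Icc a (a + n * h))) {p : ℝ} (hp : 1 ≤ p) :
    |(h * ∑ k ∈ range n, |G (a + k * h)| ^ p) ^ (1 / p) -
        (∫ x in a..a + n * h, |G x| ^ p) ^ (1 / p)| ≤ (n * h) ^ (1 / p) * (K * h) := by
  set μ := volume.restrict (Icc a (a + n * h))
  set S : ℝ → ℝ := fun x => G (a + gridIndex a h x * h)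
  have hnh : 0 ≤ (n : ℝ) * h := mul_nonneg n.cast_nonneg hh.le
  have hS : AEStronglyMeasurable S μ :=
    ((measurable_from_nat (f := fun k : ℕ => G (a + k * h))).comp
      (measurable_gridIndex a h)).aestronglyMeasurable
  have hGp : MemLp G (ENNReal.ofReal p) μ := by
    obtain ⟨M, hM⟩ := isCompact_Icc.exists_bound_of_continuousOn hG.continuousOn
    exact .of_bound (hG.continuousOn.aestronglyMeasurable measurableSet_Icc) M
      (ae_restrict_of_forall_mem measurableSet_Icc hM)
  have hSG : ∀ᵐ x ∂μ, ‖S x - G x‖ ≤ K * h := by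
    refine ae_restrict_of_forall_mem measurableSet_Icc fun x hx => ?_
    rw [← dist_eq_norm, dist_comm]
    exact (hG.dist_le_mul x hx _ (gridIndex_mul_mem_Icc hh hx)).trans
      (mul_le_mul_of_nonneg_left (dist_gridIndex_mul_le hh hx.1) K.coe_nonneg)
  have hint : ∀ F : ℝ → ℝ, ∫ x, F x ∂μ = ∫ x in a..a + n * h, F x := fun F => by
    rw [intervalIntegral.integral_of_le (le_add_of_nonneg_right hnh),
      integral_Icc_eq_integral_Ioc]
  have hSint : ∫ x in a..a + n * h, |S x| ^ p = h * ∑ k ∈ range n, |G (a + k * h)| ^ p := by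
    rw [integral_comp_gridIndex (fun k => |G (a + k * h)| ^ p) hh, Finset.mul_sum]
    rfl
  have hμ : μ.real univ = n * h := by simp [μ, hnh]
  simpa only [Real.norm_eq_abs, hint, hSint, hμ] using
    abs_integral_norm_rpow_rpow_sub_le hp hS hGp (mul_nonneg K.coe_nonneg hh.le) hSG

theorem abs_sup'_grid_sub_sSup_le (hh : 0 < h) (hG : LipschitzOnWith K G (Icc a (a + n * h))) :
    |(range (n + 1)).sup' nonempty_range_add_one (fun k => |G (a + k * h)|) -
        sSup ((fun x => |G x|) '' Icc a (a + n * h))| ≤ K * h := by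
  have hGabs : LipschitzOnWith K (fun x => |G x|) (Icc a (a + n * h)) := by
    simpa [Function.comp_def] using lipschitzWith_one_norm.comp_lipschitzOnWith hG
  refine abs_sup'_sub_sSup_image_le_of_dist_le hGabs
    (isCompact_Icc.bddAbove_image hGabs.continuousOn) _
    (fun k hk => add_mul_mem_Icc hh.le (Nat.lt_succ_iff.1 (mem_range.1 hk))) fun x hx => ?_
  exact ⟨gridIndex a h x, mem_range.2 (Nat.lt_succ_of_le (gridIndex_le hh hx.2)),
    dist_gridIndex_mul_le hh hx.1⟩

end RiemannSum

/-- Riemann-sum error for `p`-norms: if `G : [a,b] → ℝ` is Lipschitz with constant at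
most `A`, `L = b − a`, and `t_k = a + kL/n`, then for `1 ≤ p < ∞`,
`|((L/n)∑_{k<n} |G(t_k)|^p)^{1/p} − ‖G‖_{L^p([a,b])}| ≤ A L^{1+1/p}/n`, and for `p = ∞`,
`|max_{0≤k≤n} |G(t_k)| − ‖G‖_{L^∞([a,b])}| ≤ A L / n`. -/
theorem riemann_pnorm_error (a b : ℝ) (hab : a < b) (A : ℝ) (hA : 0 ≤ A)
    (G : ℝ → ℝ) (hG : ∀ x ∈ Icc a b, ∀ y ∈ Icc a b, |G x - G y| ≤ A * |x - y|)
    (n : ℕ) (hn : 0 < n) :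
    (∀ p : ℝ, 1 ≤ p →
      |(((b - a) / n) * ∑ k ∈ Finset.range n, |G (a + k * (b - a) / n)| ^ p) ^ (1 / p) -
          (∫ x in a..b, |G x| ^ p) ^ (1 / p)| ≤
        A * (b - a) ^ (1 + 1 / p) / n) ∧
    |((Finset.range (n + 1)).sup' (by simp) fun k => |G (a + k * (b - a) / n)|) -
        sSup ((fun x => |G x|) '' Icc a b)| ≤ A * (b - a) / n := by
  have hL : 0 < b - a := sub_pos.2 hab
  have hh : 0 < (b - a) / n := div_pos hL (Nat.cast_pos.2 hn)
  have hnh : n * ((b - a) / n) = b - a := mul_div_cancel₀ _ (Nat.cast_pos.2 hn).ne'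
  have hb : a + n * ((b - a) / n) = b := by rw [hnh]; ring
  have hgrid : ∀ k : ℕ, a + k * (b - a) / n = a + k * ((b - a) / n) := fun k => by
    rw [mul_div_assoc]
  have hGl : LipschitzOnWith A.toNNReal G (Icc a (a + n * ((b - a) / n))) := by
    rw [hb, Real.toNNReal_of_nonneg hA]
    exact .of_dist_le_mul fun x hx y hy => hG x hx y hy
  refine ⟨fun p hp => ?_, ?_⟩
  · have key := abs_riemannSum_rpow_sub_integral_rpow_le hh hGl hp
    rw [hb, hnh] at key
    simp only [hgrid]
    refine key.trans_eq ?_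
    rw [Real.coe_toNNReal A hA, rpow_add hL, rpow_one]
    ring
  · simpa only [hgrid, hb, Real.coe_toNNReal A hA, mul_div_assoc] using
      abs_sup'_grid_sub_sSup_le hh hGl
end
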